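/- arXiv:1209.2980 — 3 statements merged into one kernel-verified Lean document; each statement's English description precedes it below -/
import Mathlib

section
/- Let μ be a finite positive Radon measure on E satisfying Hypothesis 2.2 and let ρ ∈ BV(H,H₁). Then for every l ∈ Q^{1/2}(H) ∩ H₁ ∩ E* one has ρ ∈ BV_l(E); more precisely, for every g ∈ 𝓕C_b¹, |∫_E ⟨l, Dg(z)⟩ ρ(z) μ(dz)| ≤ (V(ρ)‖l‖_{H₁} + ‖ρ‖_{L²(μ)}‖β_l‖_{L²(μ)}) ‖g‖_∞. -/
open MeasureTheory Filter
open scoped RealInnerProductSpace ENNReal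

noncomputable section

/-- The class `𝓕C_b¹` of `C¹` cylinder functions
`u z = f (l₁ z, …, l_m z)` with `f ∈ C_b¹(ℝ^m)`. -/
def FCb1 (E : Type*) [NormedAddCommGroup E] [NormedSpace ℝ E] : Set (E → ℝ) :=
  {u | ∃ (m : ℕ) (l : Fin m → (E →L[ℝ] ℝ)) (f : (Fin m → ℝ) → ℝ),
      ContDiff ℝ 1 f ∧ (∃ C, ∀ x, |f x| ≤ C) ∧ (∃ C, ∀ x, ‖fderiv ℝ f x‖ ≤ C) ∧
      ∀ z, u z = f fun i => l i z}

/-- Directional derivative `∂u/∂v (z) = (d/ds) u (z + s v) |_{s = 0}`. -/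
def dirDeriv {E : Type*} [NormedAddCommGroup E] [NormedSpace ℝ E]
    (u : E → ℝ) (v : E) (z : E) : ℝ :=
  deriv (fun s : ℝ => u (z + s • v)) 0

/-- `β` is (a version of) the logarithmic derivative of `μ` along `v`, i.e. `μ` is
Fomin-differentiable along `v` with `d_v μ = β ⬝ μ` (a finite signed measure `≪ μ`). -/
def IsLogDeriv {E : Type*} [NormedAddCommGroup E] [NormedSpace ℝ E] [MeasurableSpace E]
    (μ : Measure E) (v : E) (β : E → ℝ) : Prop :=
  Integrable β μ ∧ ∀ φ ∈ FCb1 E, ∫ z, dirDeriv φ v z ∂μ = -∫ z, φ z * β z ∂μ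

/-- `v ∈ H(μ)` : `μ` is Fomin-differentiable along `v` with square-integrable
logarithmic derivative. -/
def MemHmu {E : Type*} [NormedAddCommGroup E] [NormedSpace ℝ E] [MeasurableSpace E]
    (μ : Measure E) (v : E) : Prop :=
  ∃ β : E → ℝ, IsLogDeriv μ v β ∧ MemLp β 2 μ

/-- Hypothesis 2.2: `Q` is a bounded symmetric nonnegative operator on `H` with nonnegative
symmetric square root `sqrtQ`, `Q^{1/2}(H) ⊆ H(μ)` (with chosen logarithmic derivatives
`β h ∈ L²(μ)` for `h ∈ Q^{1/2}(H)`), and there is an orthonormal basis `e : ℕ → H` of `H`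
consisting of elements of `E*` which are eigenvectors of `Q` with eigenvalues `lam j > 0`.
Here `ι : H →L[ℝ] E` is the embedding of `H` into `E`. -/
structure Hyp22 {E H : Type*} [NormedAddCommGroup E] [NormedSpace ℝ E] [MeasurableSpace E]
    [NormedAddCommGroup H] [InnerProductSpace ℝ H]
    (μ : Measure E) (ι : H →L[ℝ] E) (Q sqrtQ : H →L[ℝ] H)
    (e : ℕ → H) (lam : ℕ → ℝ) (β : H → E → ℝ) : Prop where
  Q_symm : ∀ x y : H, ⟪Q x, y⟫ = ⟪x, Q y⟫
  Q_nonneg : ∀ x : H, 0 ≤ ⟪Q x, x⟫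
  sqrtQ_symm : ∀ x y : H, ⟪sqrtQ x, y⟫ = ⟪x, sqrtQ y⟫
  sqrtQ_nonneg : ∀ x : H, 0 ≤ ⟪sqrtQ x, x⟫
  sqrtQ_sq : ∀ x : H, sqrtQ (sqrtQ x) = Q x
  ortho : Orthonormal ℝ e
  total : (Submodule.span ℝ (Set.range e)).topologicalClosure = ⊤
  basis_in_dual : ∀ j : ℕ, ∃ l : E →L[ℝ] ℝ, ∀ h : H, ⟪e j, h⟫ = l (ι h)
  lam_pos : ∀ j, 0 < lam j
  eigen : ∀ j, Q (e j) = lam j • e j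
  logDeriv : ∀ h ∈ Set.range sqrtQ, IsLogDeriv μ (ι h) (β h)
  logDeriv_L2 : ∀ h ∈ Set.range sqrtQ, MemLp (β h) 2 μ

/-- `x ∈ H₁`, where `H₁ = {x ∈ H : ∑ c_j² ⟨x,e_j⟩² < ∞}`. -/
def memH1 {H : Type*} [NormedAddCommGroup H] [InnerProductSpace ℝ H]
    (c : ℕ → ℝ) (e : ℕ → H) (x : H) : Prop :=
  Summable fun j => (c j) ^ 2 * ⟪x, e j⟫ ^ 2

/-- The square of the `H₁`-norm, `‖x‖_{H₁}² = ∑ c_j² ⟨x,e_j⟩²`. -/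
def normH1sq {H : Type*} [NormedAddCommGroup H] [InnerProductSpace ℝ H]
    (c : ℕ → ℝ) (e : ℕ → H) (x : H) : ℝ :=
  ∑' j, (c j) ^ 2 * ⟪x, e j⟫ ^ 2

/-- The `H₁`-inner product `⟨x,y⟩_{H₁} = ∑ c_j² ⟨x,e_j⟩⟨y,e_j⟩`. -/
def innerH1 {H : Type*} [NormedAddCommGroup H] [InnerProductSpace ℝ H]
    (c : ℕ → ℝ) (e : ℕ → H) (x y : H) : ℝ :=
  ∑' j, (c j) ^ 2 * (⟪x, e j⟫ * ⟪y, e j⟫)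

/-- The squared `H₁*`-norm of an element of `H₁*` given by its coefficients `b j`
with respect to the orthonormal basis `{c_j e_j}` of `H₁*`. -/
def normH1starSq (b : ℕ → ℝ) : ℝ := ∑' j, (b j) ^ 2

/-- The dual pairing `_{H₁}⟨x, σ⟩_{H₁*}` of `x ∈ H₁` with the element `σ ∈ H₁*` whose
coefficients with respect to the orthonormal basis `{c_j e_j}` of `H₁*` are `b j`;
since the pairing extends the inner product of `H`, it equals `∑ b_j c_j ⟨x, e_j⟩`. -/
def pairH1 {H : Type*} [NormedAddCommGroup H] [InnerProductSpace ℝ H]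
    (c : ℕ → ℝ) (e : ℕ → H) (x : H) (b : ℕ → ℝ) : ℝ :=
  ∑' j, b j * (c j * ⟪x, e j⟫)

/-- `ψ` is a version of `D*G` for the vector field `G z = ∑ j, g j z • lv j`, i.e.
`∫ ψ f dμ = ∫ ⟨G, Df⟩ dμ` for all `f ∈ 𝓕C_b¹` (note `⟨G z, Df z⟩ = ∑ j g_j(z) ∂f/∂(lv j)(z)`). -/
def IsDstar {E H : Type*} [NormedAddCommGroup E] [NormedSpace ℝ E] [MeasurableSpace E]
    [NormedAddCommGroup H] [InnerProductSpace ℝ H]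
    (μ : Measure E) (ι : H →L[ℝ] E) {m : ℕ}
    (g : Fin m → E → ℝ) (lv : Fin m → H) (ψ : E → ℝ) : Prop :=
  Integrable ψ μ ∧
    ∀ f ∈ FCb1 E, ∫ z, ψ z * f z ∂μ = ∫ z, ∑ j, g j z * dirDeriv f (ι (lv j)) z ∂μ

/-- The set of numbers `∫ D*G ρ dμ` over test vector fields
`G ∈ (𝓕C_b¹)_{Q^{1/2}(H)∩H₁}` with `‖G(z)‖_{H₁} ≤ 1` for all `z`. -/
def Vset {E H : Type*} [NormedAddCommGroup E] [NormedSpace ℝ E] [MeasurableSpace E]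
    [NormedAddCommGroup H] [InnerProductSpace ℝ H]
    (μ : Measure E) (ι : H →L[ℝ] E) (sqrtQ : H →L[ℝ] H) (c : ℕ → ℝ) (e : ℕ → H)
    (ρ : E → ℝ) : Set ℝ :=
  {r | ∃ (m : ℕ) (g : Fin m → E → ℝ) (lv : Fin m → H) (ψ : E → ℝ),
      (∀ j, g j ∈ FCb1 E) ∧ (∀ j, lv j ∈ Set.range sqrtQ) ∧ (∀ j, memH1 c e (lv j)) ∧
      (∀ z, normH1sq c e (∑ j, g j z • lv j) ≤ 1) ∧
      IsDstar μ ι g lv ψ ∧ r = ∫ z, ψ z * ρ z ∂μ}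

/-- `V(ρ)`, the total variation of `ρ`. -/
def Vtotal {E H : Type*} [NormedAddCommGroup E] [NormedSpace ℝ E] [MeasurableSpace E]
    [NormedAddCommGroup H] [InnerProductSpace ℝ H]
    (μ : Measure E) (ι : H →L[ℝ] E) (sqrtQ : H →L[ℝ] H) (c : ℕ → ℝ) (e : ℕ → H)
    (ρ : E → ℝ) : ℝ :=
  sSup (Vset μ ι sqrtQ c e ρ)

/-- `ρ ∈ BV(H, H₁)` : `ρ ∈ L²(E,μ)` and `V(ρ) < ∞`. -/
def IsBV {E H : Type*} [NormedAddCommGroup E] [NormedSpace ℝ E] [MeasurableSpace E]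
    [NormedAddCommGroup H] [InnerProductSpace ℝ H]
    (μ : Measure E) (ι : H →L[ℝ] E) (sqrtQ : H →L[ℝ] H) (c : ℕ → ℝ) (e : ℕ → H)
    (ρ : E → ℝ) : Prop :=
  MemLp ρ 2 μ ∧ BddAbove (Vset μ ι sqrtQ c e ρ)

/-- `ρ ∈ BV_l(E)` (with `v ∈ E` the direction corresponding to `l ∈ E*`):
`|∫ ∂u/∂l ρ dμ| ≤ C ‖u‖_∞` for all `u ∈ 𝓕C_b¹`. -/
def IsBVl {E : Type*} [NormedAddCommGroup E] [NormedSpace ℝ E] [MeasurableSpace E]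
    (μ : Measure E) (v : E) (ρ : E → ℝ) : Prop :=
  ∃ C > 0, ∀ u ∈ FCb1 E, ∀ M : ℝ, (∀ z, |u z| ≤ M) →
    |∫ z, dirDeriv u v z * ρ z ∂μ| ≤ C * M

/-- Integral of `f` against a signed measure, via the Jordan decomposition. -/
def sintegral {E : Type*} [MeasurableSpace E] (ν : SignedMeasure E) (f : E → ℝ) : ℝ :=
  (∫ z, f z ∂ν.toJordanDecomposition.posPart) - ∫ z, f z ∂ν.toJordanDecomposition.negPart

/-- The topological support of a measure. -/
def msupport {E : Type*} [TopologicalSpace E] [MeasurableSpace E] (ν : Measure E) : Set E :=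
  {x | ∀ U : Set E, IsOpen U → x ∈ U → 0 < ν U}

/-- The `L²(μ)`-norm. -/
def L2norm {E : Type*} [MeasurableSpace E] (μ : Measure E) (f : E → ℝ) : ℝ :=
  Real.sqrt (∫ z, (f z) ^ 2 ∂μ)

/-! The bound comes from testing `V(ρ)` on the one-direction fields `G = t g l` with `t ∈ ℝ`.
Integrating by parts against the logarithmic derivative gives `D*G = -t (∂g/∂l + g β_l)`, so
`|∫ (∂g/∂l + g β_l) ρ dμ| ≤ V(ρ) ‖l‖_{H₁} ‖g‖_∞`, letting `t → ∞` when `‖l‖_{H₁} ‖g‖_∞ = 0`.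
The remaining term `∫ g β_l ρ dμ` is bounded by Cauchy–Schwarz. -/

def IsCb1 {X : Type*} [NormedAddCommGroup X] [NormedSpace ℝ X] (f : X → ℝ) : Prop :=
  ContDiff ℝ 1 f ∧ (∃ C, ∀ x, |f x| ≤ C) ∧ ∃ C, ∀ x, ‖fderiv ℝ f x‖ ≤ C

section Cb1

variable {X Y : Type*} [NormedAddCommGroup X] [NormedSpace ℝ X]
  [NormedAddCommGroup Y] [NormedSpace ℝ Y]

theorem isCb1_const (t : ℝ) : IsCb1 fun _ : X => t :=
  ⟨contDiff_const, ⟨|t|, fun _ => le_rfl⟩, ⟨0, fun _ => by simp⟩⟩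

theorem IsCb1.comp_clm {f : Y → ℝ} (hf : IsCb1 f) (T : X →L[ℝ] Y) :
    IsCb1 fun x => f (T x) := by
  obtain ⟨hf, ⟨C, hC⟩, ⟨C', hC'⟩⟩ := hf
  refine ⟨hf.comp T.contDiff, ⟨C, fun x => hC _⟩, ⟨C' * ‖T‖, fun x => ?_⟩⟩
  have hderiv : HasFDerivAt (fun x => f (T x)) ((fderiv ℝ f (T x)).comp T) x :=
    (hf.differentiable one_ne_zero _).hasFDerivAt.comp x T.hasFDerivAt
  rw [hderiv.fderiv]
  exact (ContinuousLinearMap.opNorm_comp_le _ _).trans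
    (mul_le_mul_of_nonneg_right (hC' _) (norm_nonneg T))

theorem IsCb1.mul {f g : X → ℝ} (hf : IsCb1 f) (hg : IsCb1 g) : IsCb1 fun x => f x * g x := by
  obtain ⟨hf, ⟨C, hC⟩, ⟨C', hC'⟩⟩ := hf
  obtain ⟨hg, ⟨D, hD⟩, ⟨D', hD'⟩⟩ := hg
  have hC0 : 0 ≤ C := (abs_nonneg _).trans (hC 0)
  have hD0 : 0 ≤ D := (abs_nonneg _).trans (hD 0)
  refine ⟨hf.mul hg, ⟨C * D, fun x => ?_⟩, ⟨C * D' + D * C', fun x => ?_⟩⟩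
  · rw [abs_mul]
    exact mul_le_mul (hC x) (hD x) (abs_nonneg _) hC0
  · rw [fderiv_fun_mul (hf.differentiable one_ne_zero x) (hg.differentiable one_ne_zero x)]
    refine (norm_add_le _ _).trans (add_le_add ?_ ?_) <;> rw [norm_smul, Real.norm_eq_abs]
    · exact mul_le_mul (hC x) (hD' x) (norm_nonneg _) hC0
    · exact mul_le_mul (hD x) (hC' x) (norm_nonneg _) hD0

end Cb1

section DirDeriv

variable {E : Type*} [NormedAddCommGroup E] [NormedSpace ℝ E] {u w : E → ℝ}

theorem dirDeriv_eq_fderiv {z : E} (hu : DifferentiableAt ℝ u z) (v : E) :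
    dirDeriv u v z = fderiv ℝ u z v := by
  have hline : HasDerivAt (fun s : ℝ => z + s • v) v 0 := by
    simpa using ((hasDerivAt_id (0 : ℝ)).smul_const v).const_add z
  have hu' : HasFDerivAt u (fderiv ℝ u z) (z + (0 : ℝ) • v) := by
    simpa using hu.hasFDerivAt
  exact (hu'.comp_hasDerivAt 0 hline).deriv

theorem dirDeriv_mul {z : E} (hu : DifferentiableAt ℝ u z) (hw : DifferentiableAt ℝ w z)
    (v : E) :
    dirDeriv (fun z => u z * w z) v z = dirDeriv u v z * w z + u z * dirDeriv w v z := by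
  rw [dirDeriv_eq_fderiv (hu.fun_mul hw), dirDeriv_eq_fderiv hu, dirDeriv_eq_fderiv hw,
    fderiv_fun_mul hu hw]
  simp only [add_apply, smul_apply, smul_eq_mul]
  ring

theorem dirDeriv_const_mul {z : E} (hu : DifferentiableAt ℝ u z) (t : ℝ) (v : E) :
    dirDeriv (fun z => t * u z) v z = t * dirDeriv u v z := by
  rw [dirDeriv_eq_fderiv (hu.const_mul t), dirDeriv_eq_fderiv hu, fderiv_const_mul hu]
  rfl

end DirDeriv

namespace FCb1

variable {E : Type*} [NormedAddCommGroup E] [NormedSpace ℝ E] {u w : E → ℝ}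

theorem mem_iff : u ∈ FCb1 E ↔ ∃ (m : ℕ) (l : Fin m → E →L[ℝ] ℝ) (f : (Fin m → ℝ) → ℝ),
    IsCb1 f ∧ ∀ z, u z = f fun i => l i z := by
  simp only [FCb1, IsCb1, Set.mem_ofPred_eq, and_assoc]

theorem isCb1 (hu : u ∈ FCb1 E) : IsCb1 u := by
  obtain ⟨m, l, f, hf, hu⟩ := mem_iff.1 hu
  rw [funext hu]
  exact hf.comp_clm (ContinuousLinearMap.pi l)

theorem differentiable (hu : u ∈ FCb1 E) : Differentiable ℝ u :=
  (isCb1 hu).1.differentiable one_ne_zero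

theorem const (t : ℝ) : (fun _ => t) ∈ FCb1 E :=
  mem_iff.2 ⟨0, Fin.elim0, fun _ => t, isCb1_const t, fun _ => rfl⟩

theorem mul (hu : u ∈ FCb1 E) (hw : w ∈ FCb1 E) : (fun z => u z * w z) ∈ FCb1 E := by
  obtain ⟨m, l, f, hf, hu⟩ := mem_iff.1 hu
  obtain ⟨n, k, g, hg, hw⟩ := mem_iff.1 hw
  let P : (Fin (m + n) → ℝ) →L[ℝ] Fin m → ℝ :=
    ContinuousLinearMap.pi fun i => ContinuousLinearMap.proj (Fin.castAdd n i)
  let R : (Fin (m + n) → ℝ) →L[ℝ] Fin n → ℝ :=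
    ContinuousLinearMap.pi fun i => ContinuousLinearMap.proj (Fin.natAdd m i)
  refine mem_iff.2 ⟨m + n, Fin.append l k, fun x => f (P x) * g (R x),
    (hf.comp_clm P).mul (hg.comp_clm R), fun z => ?_⟩
  simp [P, R, hu, hw]

theorem const_mul (hu : u ∈ FCb1 E) (t : ℝ) : (fun z => t * u z) ∈ FCb1 E :=
  mul (const t) hu

theorem continuous_dirDeriv (hu : u ∈ FCb1 E) (v : E) : Continuous (dirDeriv u v) := by
  rw [funext fun z => dirDeriv_eq_fderiv (differentiable hu z) v]
  exact ((isCb1 hu).1.continuous_fderiv one_ne_zero).clm_apply continuous_const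

theorem abs_dirDeriv_le (hu : u ∈ FCb1 E) (v : E) : ∃ C, ∀ z, |dirDeriv u v z| ≤ C := by
  obtain ⟨-, -, ⟨C, hC⟩⟩ := isCb1 hu
  refine ⟨C * ‖v‖, fun z => ?_⟩
  rw [dirDeriv_eq_fderiv (differentiable hu z), ← Real.norm_eq_abs]
  exact ((fderiv ℝ u z).le_opNorm v).trans (mul_le_mul_of_nonneg_right (hC z) (norm_nonneg v))

variable [MeasurableSpace E] [OpensMeasurableSpace E] {μ : Measure E}

theorem memLp_top (hu : u ∈ FCb1 E) : MemLp u ∞ μ := by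
  obtain ⟨hc, ⟨C, hC⟩, -⟩ := isCb1 hu
  exact memLp_top_of_bound hc.continuous.aestronglyMeasurable C (ae_of_all _ hC)

theorem memLp_top_dirDeriv (hu : u ∈ FCb1 E) (v : E) : MemLp (dirDeriv u v) ∞ μ := by
  obtain ⟨C, hC⟩ := abs_dirDeriv_le hu v
  exact memLp_top_of_bound (continuous_dirDeriv hu v).aestronglyMeasurable C (ae_of_all _ hC)

end FCb1

theorem normH1sq_nonneg {H : Type*} [NormedAddCommGroup H] [InnerProductSpace ℝ H]
    (c : ℕ → ℝ) (e : ℕ → H) (x : H) : 0 ≤ normH1sq c e x :=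
  tsum_nonneg fun _ => by positivity

theorem normH1sq_smul {H : Type*} [NormedAddCommGroup H] [InnerProductSpace ℝ H]
    (c : ℕ → ℝ) (e : ℕ → H) (a : ℝ) (x : H) :
    normH1sq c e (a • x) = a ^ 2 * normH1sq c e x := by
  rw [normH1sq, normH1sq, ← tsum_mul_left]
  exact tsum_congr fun j => by rw [real_inner_smul_left]; ring

theorem abs_le_mul_of_forall_mul_le {I V a : ℝ} (ha : 0 ≤ a)
    (h : ∀ t : ℝ, |t| * a ≤ 1 → t * I ≤ V) : |I| ≤ V * a := by
  rcases ha.eq_or_lt with rfl | ha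
  · have hV : 0 ≤ V := by simpa using h 0
    by_contra hI
    have hI : I ≠ 0 := fun h0 => hI (by simp [h0])
    have := h ((V + 1) / I) (by simp)
    rw [div_mul_cancel₀ _ hI] at this
    linarith
  · have hpos := h a⁻¹ (by rw [abs_inv, abs_of_pos ha, inv_mul_cancel₀ ha.ne'])
    have hneg := h (-a⁻¹) (by rw [abs_neg, abs_inv, abs_of_pos ha, inv_mul_cancel₀ ha.ne'])
    have hle := (inv_mul_le_iff₀ ha).1 hpos
    have hge := (le_inv_mul_iff₀ ha).1 (neg_le.1 (by simpa only [neg_mul] using hneg))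
    exact abs_le.2 ⟨by linarith, by linarith⟩

section L2

variable {α : Type*} [MeasurableSpace α] {μ : Measure α} {f k : α → ℝ}

theorem integral_abs_mul_abs_le_L2norm_mul (hf : MemLp f 2 μ) (hk : MemLp k 2 μ) :
    ∫ z, |f z| * |k z| ∂μ ≤ L2norm μ f * L2norm μ k := by
  have h := integral_mul_norm_le_Lp_mul_Lq Real.HolderConjugate.two_two
    (by simpa using hf) (by simpa using hk)
  simpa [L2norm, Real.sqrt_eq_rpow] using h

theorem abs_integral_mul_mul_le [Nonempty α] {g : α → ℝ} {M : ℝ} (hM : ∀ z, |g z| ≤ M)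
    (hf : MemLp f 2 μ) (hk : MemLp k 2 μ) :
    |∫ z, g z * (f z * k z) ∂μ| ≤ M * (L2norm μ f * L2norm μ k) := by
  have hfk : Integrable (fun z => |f z| * |k z|) μ := hf.abs.integrable_mul hk.abs
  calc |∫ z, g z * (f z * k z) ∂μ| ≤ ∫ z, |g z * (f z * k z)| ∂μ :=
        abs_integral_le_integral_abs
    _ ≤ ∫ z, M * (|f z| * |k z|) ∂μ := by
        refine integral_mono_of_nonneg (ae_of_all _ fun z => abs_nonneg _) (hfk.const_mul M)
          (ae_of_all _ fun z => ?_)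
        dsimp only
        rw [abs_mul, abs_mul]
        exact mul_le_mul_of_nonneg_right (hM z) (by positivity)
    _ = M * ∫ z, |f z| * |k z| ∂μ := integral_const_mul M _
    _ ≤ M * (L2norm μ f * L2norm μ k) :=
        mul_le_mul_of_nonneg_left (integral_abs_mul_abs_le_L2norm_mul hf hk)
          ((abs_nonneg _).trans (hM (Classical.arbitrary _)))

end L2

theorem isBVl_of_forall_abs_integral_le {E : Type*} [NormedAddCommGroup E] [NormedSpace ℝ E]
    [MeasurableSpace E] {μ : Measure E} {v : E} {ρ : E → ℝ} {K : ℝ}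
    (hK : ∀ u ∈ FCb1 E, ∀ M : ℝ, (∀ z, |u z| ≤ M) →
      |∫ z, dirDeriv u v z * ρ z ∂μ| ≤ K * M) :
    IsBVl μ v ρ :=
  ⟨max K 1, lt_max_of_lt_right one_pos, fun u hu M hM =>
    (hK u hu M hM).trans
      (mul_le_mul_of_nonneg_right (le_max_left _ _) ((abs_nonneg _).trans (hM 0)))⟩

section LogDeriv

variable {E H : Type*} [NormedAddCommGroup E] [NormedSpace ℝ E] [MeasurableSpace E]
  [OpensMeasurableSpace E] [NormedAddCommGroup H] [InnerProductSpace ℝ H]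
  {μ : Measure E} [IsFiniteMeasure μ] {ι : H →L[ℝ] E} {sqrtQ : H →L[ℝ] H} {c : ℕ → ℝ}
  {e : ℕ → H} {h : H} {v : E} {β ρ f g : E → ℝ}

namespace IsLogDeriv

theorem integrable_dirDeriv_add_mul (hβ : IsLogDeriv μ v β) (hg : g ∈ FCb1 E) :
    Integrable (fun z => dirDeriv g v z + g z * β z) μ :=
  ((FCb1.memLp_top_dirDeriv hg v).integrable le_top).add
    (hβ.1.mul_of_top_right (FCb1.memLp_top hg))

theorem integral_dirDeriv_mul (hβ : IsLogDeriv μ v β) (hf : f ∈ FCb1 E) (hg : g ∈ FCb1 E) :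
    ∫ z, dirDeriv f v z * g z ∂μ = ∫ z, -(dirDeriv g v z + g z * β z) * f z ∂μ := by
  have hfg := FCb1.mul hf hg
  have hparts := hβ.2 _ hfg
  have hsplit : ∀ z, dirDeriv f v z * g z = (dirDeriv (fun z => f z * g z) v z
      + f z * g z * β z) + -(dirDeriv g v z + g z * β z) * f z := fun z => by
    rw [dirDeriv_mul (FCb1.differentiable hf z) (FCb1.differentiable hg z)]
    ring
  have hderiv : Integrable (fun z => dirDeriv (fun z => f z * g z) v z) μ :=
    (FCb1.memLp_top_dirDeriv hfg v).integrable le_top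
  have hprod : Integrable (fun z => f z * g z * β z) μ :=
    hβ.1.mul_of_top_right (FCb1.memLp_top hfg)
  have hψ : Integrable (fun z => -(dirDeriv g v z + g z * β z) * f z) μ :=
    (hβ.integrable_dirDeriv_add_mul hg).neg.mul_of_top_left (FCb1.memLp_top hf)
  have hsum : Integrable (fun z => dirDeriv (fun z => f z * g z) v z + f z * g z * β z) μ :=
    hderiv.add hprod
  -- the first summand integrates to zero: this is the defining identity of `β` for `f g`
  simp_rw [hsplit]
  rw [integral_add hsum hψ, integral_add hderiv hprod, hparts]
  ring

theorem isDstar_single (hβ : IsLogDeriv μ (ι h) β) (hg : g ∈ FCb1 E) :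
    IsDstar μ ι (fun _ : Fin 1 => g) (fun _ => h)
      fun z => -(dirDeriv g (ι h) z + g z * β z) :=
  ⟨(hβ.integrable_dirDeriv_add_mul hg).neg, fun f hf =>
    (hβ.integral_dirDeriv_mul hf hg).symm.trans
      (integral_congr_ae (ae_of_all _ fun z => by simp only [Fin.sum_univ_one]; ring))⟩

theorem integral_mem_Vset (hβ : IsLogDeriv μ (ι h) β) (hhQ : h ∈ Set.range sqrtQ)
    (hh : memH1 c e h) (hg : g ∈ FCb1 E) (hgh : ∀ z, g z ^ 2 * normH1sq c e h ≤ 1) :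
    ∫ z, -(dirDeriv g (ι h) z + g z * β z) * ρ z ∂μ ∈ Vset μ ι sqrtQ c e ρ :=
  ⟨1, fun _ => g, fun _ => h, _, fun _ => hg, fun _ => hhQ, fun _ => hh,
    fun z => by simpa only [Fin.sum_univ_one, normH1sq_smul] using hgh z,
    hβ.isDstar_single hg, rfl⟩

theorem abs_integral_dirDeriv_add_mul_le (hV : BddAbove (Vset μ ι sqrtQ c e ρ))
    (hβ : IsLogDeriv μ (ι h) β) (hhQ : h ∈ Set.range sqrtQ) (hh : memH1 c e h)
    (hg : g ∈ FCb1 E) {M : ℝ} (hM : ∀ z, |g z| ≤ M) :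
    |∫ z, (dirDeriv g (ι h) z + g z * β z) * ρ z ∂μ|
      ≤ Vtotal μ ι sqrtQ c e ρ * (M * √(normH1sq c e h)) := by
  have hM0 : 0 ≤ M := (abs_nonneg _).trans (hM 0)
  refine abs_le_mul_of_forall_mul_le (by positivity) fun t ht => ?_
  have hscaled : ∀ z, (-t * g z) ^ 2 * normH1sq c e h ≤ 1 := fun z => by
    have hle : |-t * g z| * √(normH1sq c e h) ≤ 1 := by
      refine le_trans ?_ ht
      rw [abs_mul, abs_neg, mul_assoc]
      gcongr
      exact hM z
    calc (-t * g z) ^ 2 * normH1sq c e h = (|-t * g z| * √(normH1sq c e h)) ^ 2 := by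
          rw [mul_pow |-t * g z|, sq_abs, Real.sq_sqrt (normH1sq_nonneg c e h)]
      _ ≤ 1 := pow_le_one₀ (by positivity) hle
  calc t * ∫ z, (dirDeriv g (ι h) z + g z * β z) * ρ z ∂μ
      = ∫ z, -(dirDeriv (fun z => -t * g z) (ι h) z + -t * g z * β z) * ρ z ∂μ := by
        rw [← integral_const_mul]
        refine integral_congr_ae (ae_of_all _ fun z => ?_)
        dsimp only
        rw [dirDeriv_const_mul (FCb1.differentiable hg z)]
        ring
    _ ≤ Vtotal μ ι sqrtQ c e ρ :=
        le_csSup hV (hβ.integral_mem_Vset hhQ hh (FCb1.const_mul hg (-t)) hscaled)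

theorem abs_integral_dirDeriv_mul_le (hV : BddAbove (Vset μ ι sqrtQ c e ρ))
    (hβ : IsLogDeriv μ (ι h) β) (hβ2 : MemLp β 2 μ) (hρ : MemLp ρ 2 μ)
    (hhQ : h ∈ Set.range sqrtQ) (hh : memH1 c e h) (hg : g ∈ FCb1 E) {M : ℝ}
    (hM : ∀ z, |g z| ≤ M) :
    |∫ z, dirDeriv g (ι h) z * ρ z ∂μ|
      ≤ (Vtotal μ ι sqrtQ c e ρ * √(normH1sq c e h) + L2norm μ ρ * L2norm μ β) * M := by
  have hderiv : Integrable (fun z => dirDeriv g (ι h) z * ρ z) μ :=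
    (hρ.integrable one_le_two).mul_of_top_right (FCb1.memLp_top_dirDeriv hg _)
  have hprod : Integrable (fun z => g z * (β z * ρ z)) μ :=
    (hβ2.integrable_mul hρ).mul_of_top_right (FCb1.memLp_top hg)
  have hsplit : ∫ z, dirDeriv g (ι h) z * ρ z ∂μ
      = ∫ z, (dirDeriv g (ι h) z + g z * β z) * ρ z ∂μ - ∫ z, g z * (β z * ρ z) ∂μ := by
    rw [eq_sub_iff_add_eq, ← integral_add hderiv hprod]
    exact integral_congr_ae (ae_of_all _ fun z => by ring)
  rw [hsplit]
  calc _ ≤ |∫ z, (dirDeriv g (ι h) z + g z * β z) * ρ z ∂μ| + |∫ z, g z * (β z * ρ z) ∂μ| :=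
        abs_sub _ _
    _ ≤ Vtotal μ ι sqrtQ c e ρ * (M * √(normH1sq c e h)) + M * (L2norm μ β * L2norm μ ρ) :=
        add_le_add (hβ.abs_integral_dirDeriv_add_mul_le hV hhQ hh hg hM)
          (abs_integral_mul_mul_le hM hβ2 hρ)
    _ = _ := by ring

end IsLogDeriv

end LogDeriv

theorem stmt1_general {E H : Type*} [NormedAddCommGroup E] [NormedSpace ℝ E]
    [MeasurableSpace E] [BorelSpace E]
    [NormedAddCommGroup H] [InnerProductSpace ℝ H]
    (μ : Measure E) [IsFiniteMeasure μ]
    (ι : H →L[ℝ] E)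
    (Q sqrtQ : H →L[ℝ] H) (e : ℕ → H) (lam : ℕ → ℝ) (β : H → E → ℝ)
    (hyp : Hyp22 μ ι Q sqrtQ e lam β)
    (c : ℕ → ℝ)
    (ρ : E → ℝ) (hρBV : IsBV μ ι sqrtQ c e ρ)
    (hl : H) (hlQ : hl ∈ Set.range sqrtQ) (hlH1 : memH1 c e hl) :
    IsBVl μ (ι hl) ρ ∧
      ∀ g ∈ FCb1 E, ∀ M : ℝ, (∀ z, |g z| ≤ M) →
        |∫ z, dirDeriv g (ι hl) z * ρ z ∂μ| ≤
          (Vtotal μ ι sqrtQ c e ρ * Real.sqrt (normH1sq c e hl) +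
            L2norm μ ρ * L2norm μ (β hl)) * M := by
  have hbound := fun g (hg : g ∈ FCb1 E) M (hM : ∀ z, |g z| ≤ M) =>
    (hyp.logDeriv hl hlQ).abs_integral_dirDeriv_mul_le hρBV.2 (hyp.logDeriv_L2 hl hlQ)
      hρBV.1 hlQ hlH1 hg hM
  exact ⟨isBVl_of_forall_abs_integral_le hbound, hbound⟩

/-- Theorem 3.2 (i): `BV(H,H₁) ⊆ ⋂ BV_l(E)`, with the explicit bound. -/
theorem stmt1 {E H : Type*} [NormedAddCommGroup E] [NormedSpace ℝ E] [CompleteSpace E]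
    [SecondCountableTopology E] [MeasurableSpace E] [BorelSpace E]
    [NormedAddCommGroup H] [InnerProductSpace ℝ H] [CompleteSpace H]
    [SecondCountableTopology H]
    (μ : Measure E) [IsFiniteMeasure μ] (hμ0 : μ ≠ 0)
    (ι : H →L[ℝ] E) (hinj : Function.Injective ι) (hdense : DenseRange ι)
    (Q sqrtQ : H →L[ℝ] H) (e : ℕ → H) (lam : ℕ → ℝ) (β : H → E → ℝ)
    (hyp : Hyp22 μ ι Q sqrtQ e lam β)
    (c : ℕ → ℝ) (hc : ∀ j, 1 ≤ c j)
    (ρ : E → ℝ) (hρmeas : Measurable ρ) (hρBV : IsBV μ ι sqrtQ c e ρ)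
    (hl : H) (hlQ : hl ∈ Set.range sqrtQ) (hlH1 : memH1 c e hl)
    (l : E →L[ℝ] ℝ) (hrep : ∀ h : H, ⟪hl, h⟫ = l (ι h)) :
    IsBVl μ (ι hl) ρ ∧
      ∀ g ∈ FCb1 E, ∀ M : ℝ, (∀ z, |g z| ≤ M) →
        |∫ z, dirDeriv g (ι hl) z * ρ z ∂μ| ≤
          (Vtotal μ ι sqrtQ c e ρ * Real.sqrt (normH1sq c e hl) +
            L2norm μ ρ * L2norm μ (β hl)) * M :=
  stmt1_general μ ι Q sqrtQ e lam β hyp c ρ hρBV hl hlQ hlH1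

end
end

section
/- Let E be a real separable Banach space, γ a finite positive Borel measure on E, n ∈ ℕ, v₁,…,v_n ∈ L¹(E,γ), and V ≥ 0. Suppose that for all g₁,…,g_n ∈ 𝓕C_b¹ satisfying Σ_{j=1}^n g_j(z)² ≤ 1 for every z ∈ E one has Σ_{j=1}^n ∫_E g_j(z) v_j(z) γ(dz) ≤ V. Then ∫_E √(Σ_{j=1}^n v_j(z)²) γ(dz) ≤ V. -/
open MeasureTheory Filter
open scoped RealInnerProductSpace ENNReal

noncomputable section

/-! Put `W = (v₁, …, v_n)`. The field `s = W / ‖W‖` has `‖s‖ ≤ 1` and `⟪s, W⟫ = ‖W‖`, so it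
suffices to approximate `s` in `L¹(‖W‖ γ)` by `𝓕C_b¹` fields `G` with `‖G‖ ≤ 1`. To do so,
approximate `(1 - δ) s` by a bounded continuous field, that one uniformly on a compact set of
almost full measure (tightness) by a `C¹` function of finitely many functionals
(Stone–Weierstrass: `E*` separates points), and compose with a smooth map which is the identity
on the ball of radius `1 - δ` and takes values in the unit ball; a bump cut-off in the
finite-dimensional variables makes the derivative bounded. -/

theorem EuclideanSpace.norm_le_sum_norm {𝕜 ι : Type*} [RCLike 𝕜] [Fintype ι]
    (x : EuclideanSpace 𝕜 ι) : ‖x‖ ≤ ∑ i, ‖x i‖ := by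
  rw [EuclideanSpace.norm_eq]
  exact Real.sqrt_le_iff.2 ⟨by positivity,
    Finset.sum_sq_le_sq_sum_of_nonneg fun _ _ => norm_nonneg _⟩

section Cylinder

variable {E : Type*} [NormedAddCommGroup E] [NormedSpace ℝ E]

def IsC1Cylinder (u : E → ℝ) : Prop :=
  ∃ (m : ℕ) (l : Fin m → E →L[ℝ] ℝ) (F : (Fin m → ℝ) → ℝ),
    ContDiff ℝ 1 F ∧ ∀ z, u z = F fun i => l i z

theorem IsC1Cylinder.exists_common {ι : Type*} [Fintype ι] {u : ι → E → ℝ}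
    (hu : ∀ j, IsC1Cylinder (u j)) :
    ∃ (m : ℕ) (l : Fin m → E →L[ℝ] ℝ) (F : ι → (Fin m → ℝ) → ℝ),
      (∀ j, ContDiff ℝ 1 (F j)) ∧ ∀ j z, u j z = F j fun i => l i z := by
  choose m l F hF hu using hu
  let L : (Σ j, Fin (m j)) → E →L[ℝ] ℝ := fun p => l p.1 p.2
  let e := Fintype.equivFin (Σ j, Fin (m j))
  refine ⟨_, fun k => L (e.symm k), fun j x => F j fun i => x (e ⟨j, i⟩),
    fun j => (hF j).comp (contDiff_pi.2 fun i => contDiff_apply ℝ ℝ _), fun j z => ?_⟩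
  simp only [Equiv.symm_apply_apply]
  exact hu j z

theorem isC1Cylinder_const (r : ℝ) : IsC1Cylinder fun _ : E => r :=
  ⟨0, Fin.elim0, fun _ => r, contDiff_const, fun _ => rfl⟩

theorem ContinuousLinearMap.isC1Cylinder (l : E →L[ℝ] ℝ) : IsC1Cylinder l :=
  ⟨1, fun _ => l, fun x => x 0, contDiff_apply ℝ ℝ 0, fun _ => rfl⟩

theorem IsC1Cylinder.add {u v : E → ℝ} (hu : IsC1Cylinder u) (hv : IsC1Cylinder v) :
    IsC1Cylinder (u + v) := by
  obtain ⟨m, l, F, hF, h⟩ :=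
    IsC1Cylinder.exists_common (u := ![u, v]) (Fin.forall_fin_two.2 ⟨hu, hv⟩)
  exact ⟨m, l, F 0 + F 1, (hF 0).add (hF 1), fun z => congrArg₂ (· + ·) (h 0 z) (h 1 z)⟩

theorem IsC1Cylinder.mul {u v : E → ℝ} (hu : IsC1Cylinder u) (hv : IsC1Cylinder v) :
    IsC1Cylinder (u * v) := by
  obtain ⟨m, l, F, hF, h⟩ :=
    IsC1Cylinder.exists_common (u := ![u, v]) (Fin.forall_fin_two.2 ⟨hu, hv⟩)
  exact ⟨m, l, F 0 * F 1, (hF 0).mul (hF 1), fun z => congrArg₂ (· * ·) (h 0 z) (h 1 z)⟩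

def c1CylinderSubalgebra (K : Set E) : Subalgebra ℝ C(K, ℝ) where
  carrier := {p | ∃ u : E → ℝ, IsC1Cylinder u ∧ ∀ z, p z = u z}
  mul_mem' := by
    rintro p q ⟨u, hu, hpu⟩ ⟨v, hv, hqv⟩
    exact ⟨u * v, hu.mul hv, fun z => by simp [hpu, hqv]⟩
  add_mem' := by
    rintro p q ⟨u, hu, hpu⟩ ⟨v, hv, hqv⟩
    exact ⟨u + v, hu.add hv, fun z => by simp [hpu, hqv]⟩
  algebraMap_mem' r := ⟨fun _ => r, isC1Cylinder_const r, fun _ => rfl⟩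

theorem c1CylinderSubalgebra_separatesPoints (K : Set E) :
    (c1CylinderSubalgebra K).SeparatesPoints := by
  intro x y hxy
  obtain ⟨l, hl⟩ := SeparatingDual.exists_separating_of_ne (R := ℝ) (Subtype.coe_ne_coe.2 hxy)
  exact ⟨_, ⟨⟨fun z : K => l z, by fun_prop⟩, ⟨l, l.isC1Cylinder, fun _ => rfl⟩, rfl⟩, hl⟩

theorem IsCompact.exists_isC1Cylinder_near {K : Set E} (hK : IsCompact K) {c : E → ℝ}
    (hc : Continuous c) {δ : ℝ} (hδ : 0 < δ) :
    ∃ u, IsC1Cylinder u ∧ ∀ z ∈ K, |u z - c z| < δ := by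
  have := isCompact_iff_compactSpace.1 hK
  obtain ⟨⟨p, u, hu, hpu⟩, hp⟩ :=
    ContinuousMap.exists_mem_subalgebra_near_continuous_of_separatesPoints _
      (c1CylinderSubalgebra_separatesPoints K) (fun z : K => c z) (by fun_prop) δ hδ
  exact ⟨u, hu, fun z hz => by simpa [hpu] using hp ⟨z, hz⟩⟩

theorem IsCompact.exists_contDiff_comp_near {n : ℕ} {K : Set E} (hK : IsCompact K)
    {c : E → EuclideanSpace ℝ (Fin n)} (hc : Continuous c) {δ : ℝ} (hδ : 0 < δ) :
    ∃ (m : ℕ) (l : Fin m → E →L[ℝ] ℝ) (F : (Fin m → ℝ) → EuclideanSpace ℝ (Fin n)),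
      ContDiff ℝ 1 F ∧ ∀ z ∈ K, ‖F (fun i => l i z) - c z‖ ≤ δ := by
  have hδ' : 0 < δ / (n + 1) := by positivity
  choose u hu huc using fun j : Fin n =>
    hK.exists_isC1Cylinder_near (c := fun z => c z j) (by fun_prop) hδ'
  obtain ⟨m, l, F, hF, hFu⟩ := IsC1Cylinder.exists_common hu
  refine ⟨m, l, fun x => WithLp.toLp 2 fun j => F j x, (contDiff_piLp 2).2 hF, fun z hz => ?_⟩
  calc _ ≤ ∑ j, ‖F j (fun i => l i z) - c z j‖ := EuclideanSpace.norm_le_sum_norm _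
    _ ≤ ∑ _j : Fin n, δ / (n + 1) :=
      Finset.sum_le_sum fun j _ => by rw [← hFu]; exact (huc j z hz).le
    _ ≤ δ := by
      rw [Finset.sum_const, Finset.card_univ, Fintype.card_fin, nsmul_eq_mul, mul_div_assoc']
      exact div_le_of_le_mul₀ (by positivity) hδ.le (by linarith)

end Cylinder

section Truncation

variable {X Y : Type*} [NormedAddCommGroup X] [NormedSpace ℝ X] [FiniteDimensional ℝ X]
  [NormedAddCommGroup Y] [NormedSpace ℝ Y]

theorem exists_contDiff_lipschitz_eqOn_closedBall_norm_le_one {b : ℝ} (hb : b < 1) :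
    ∃ N : X → X, ContDiff ℝ 1 N ∧ (∃ L, LipschitzWith L N) ∧
      (∀ y, ‖y‖ ≤ b → N y = y) ∧ ∀ y, ‖N y‖ ≤ 1 := by
  let ρ : ContDiffBump (0 : X) := ⟨max b (1 / 2), 1, by positivity, max_lt hb (by norm_num)⟩
  have hN : ContDiff ℝ 1 fun y => ρ y • y := ρ.contDiff.smul contDiff_id
  refine ⟨fun y => ρ y • y, hN,
    hN.lipschitzWith_of_hasCompactSupport (ρ.hasCompactSupport.smul_right) one_ne_zero,
    fun y hy => ?_, fun y => ?_⟩
  · dsimp only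
    rw [ρ.one_of_mem_closedBall (mem_closedBall_zero_iff.2 (hy.trans (le_max_left _ _))),
      one_smul]
  · dsimp only
    rcases lt_or_ge ‖y‖ 1 with hy | hy
    · rw [norm_smul, Real.norm_of_nonneg ρ.nonneg]
      exact mul_le_one₀ ρ.le_one (norm_nonneg _) hy.le
    · rw [ρ.zero_of_le_dist (by rwa [dist_zero_right]), zero_smul, norm_zero]
      exact zero_le_one

theorem exists_contDiff_hasCompactSupport_eqOn_closedBall {h : X → Y} (hh : ContDiff ℝ 1 h)
    (hh1 : ∀ x, ‖h x‖ ≤ 1) (R : ℝ) :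
    ∃ f : X → Y, ContDiff ℝ 1 f ∧ HasCompactSupport f ∧ (∀ x, ‖f x‖ ≤ 1) ∧
      ∀ x, ‖x‖ ≤ R → f x = h x := by
  let χ : ContDiffBump (0 : X) := ⟨|R| + 1, |R| + 2, by positivity, by linarith⟩
  refine ⟨fun x => χ x • h x, χ.contDiff.smul hh, χ.hasCompactSupport.smul_right,
    fun x => ?_, fun x hx => ?_⟩
  · dsimp only
    rw [norm_smul, Real.norm_of_nonneg χ.nonneg]
    exact mul_le_one₀ χ.le_one (norm_nonneg _) (hh1 x)
  · dsimp only
    rw [χ.one_of_mem_closedBall (mem_closedBall_zero_iff.2 (by linarith [le_abs_self R])),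
      one_smul]

end Truncation

section FCb1

variable {E : Type*} [NormedAddCommGroup E] [NormedSpace ℝ E]

theorem mem_FCb1_of_hasCompactSupport {m : ℕ}
    (l : Fin m → E →L[ℝ] ℝ) {f : (Fin m → ℝ) → ℝ} (hf : ContDiff ℝ 1 f)
    (hfc : HasCompactSupport f) : (fun z => f fun i => l i z) ∈ FCb1 E :=
  ⟨m, l, f, hf, hfc.exists_bound_of_continuous hf.continuous,
    (hfc.fderiv ℝ).exists_bound_of_continuous (hf.continuous_fderiv one_ne_zero), fun _ => rfl⟩

theorem continuous_of_mem_FCb1 {u : E → ℝ} (hu : u ∈ FCb1 E) : Continuous u := by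
  obtain ⟨m, l, f, hf, -, -, hu⟩ := hu
  rw [funext hu]
  exact hf.continuous.comp (by fun_prop)

theorem continuous_of_forall_mem_FCb1 {n : ℕ} {G : E → EuclideanSpace ℝ (Fin n)}
    (hG : ∀ j, (fun z => G z j) ∈ FCb1 E) : Continuous G :=
  (PiLp.continuous_toLp 2 _).comp (continuous_pi fun j => continuous_of_mem_FCb1 (hG j))

theorem integrable_mul_of_mem_FCb1 [MeasurableSpace E] [OpensMeasurableSpace E] {μ : Measure E}
    {u v : E → ℝ} (hu : u ∈ FCb1 E) (hv : Integrable v μ) :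
    Integrable (fun z => u z * v z) μ := by
  have hc := continuous_of_mem_FCb1 hu
  obtain ⟨m, l, f, -, ⟨C, hC⟩, -, hu'⟩ := hu
  exact hv.bdd_mul hc.aestronglyMeasurable
    (ae_of_all _ fun z => by rw [hu', Real.norm_eq_abs]; exact hC _)

theorem IsCompact.exists_FCb1_near_comp {K : Set E} (hK : IsCompact K) {n : ℕ}
    {N : EuclideanSpace ℝ (Fin n) → EuclideanSpace ℝ (Fin n)} (hN : ContDiff ℝ 1 N)
    (hN1 : ∀ y, ‖N y‖ ≤ 1) {L : NNReal} (hL : LipschitzWith L N)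
    {c : E → EuclideanSpace ℝ (Fin n)} (hc : Continuous c) {η : ℝ} (hη : 0 < η) :
    ∃ G : E → EuclideanSpace ℝ (Fin n), (∀ j, (fun z => G z j) ∈ FCb1 E) ∧
      (∀ z, ‖G z‖ ≤ 1) ∧ ∀ z ∈ K, ‖G z - N (c z)‖ ≤ L * η := by
  obtain ⟨m, l, F, hF, hFc⟩ := hK.exists_contDiff_comp_near hc hη
  obtain ⟨R, hR⟩ := hK.exists_bound_of_continuousOn
    (f := fun z => fun i => l i z) (by fun_prop : Continuous _).continuousOn
  obtain ⟨f, hf, hfc, hf1, hfN⟩ :=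
    exists_contDiff_hasCompactSupport_eqOn_closedBall (hN.comp hF) (fun x => hN1 _) R
  refine ⟨fun z => f fun i => l i z, fun j => ?_, fun z => hf1 _, fun z hz => ?_⟩
  · exact mem_FCb1_of_hasCompactSupport l (f := fun x => f x j)
      ((EuclideanSpace.proj (𝕜 := ℝ) j).contDiff.comp hf)
      (hfc.comp_left (map_zero (EuclideanSpace.proj j)))
  · dsimp only
    rw [hfN _ (hR z hz)]
    exact (hL.norm_sub_le _ _).trans (by gcongr; exact hFc z hz)

end FCb1

theorem integrable_inner_of_norm_le_one {E F : Type*} [MeasurableSpace E] {μ : Measure E}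
    [NormedAddCommGroup F] [InnerProductSpace ℝ F] {f W : E → F}
    (hf : AEStronglyMeasurable f μ) (hf1 : ∀ z, ‖f z‖ ≤ 1) (hW : Integrable W μ) :
    Integrable (fun z => ⟪f z, W z⟫) μ :=
  hW.norm.mono' (hf.inner hW.1) (ae_of_all _ fun z =>
    (norm_inner_le_norm _ _).trans (mul_le_of_le_one_left (norm_nonneg _) (hf1 z)))

theorem integrable_norm_sub_of_norm_le_one {α F : Type*} [MeasurableSpace α] {μ : Measure α}
    [IsFiniteMeasure μ] [NormedAddCommGroup F] {f g : α → F} (hf : AEStronglyMeasurable f μ)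
    (hg : AEStronglyMeasurable g μ) (hf1 : ∀ z, ‖f z‖ ≤ 1) (hg1 : ∀ z, ‖g z‖ ≤ 1) :
    Integrable (fun z => ‖f z - g z‖) μ :=
  .of_bound (hf.sub hg).norm 2 (ae_of_all _ fun z => by
    rw [norm_norm]; exact (norm_sub_le _ _).trans (by linarith [hf1 z, hg1 z]))

section Approximation

variable {E : Type*} [NormedAddCommGroup E] [NormedSpace ℝ E] [CompleteSpace E]
  [SecondCountableTopology E] [MeasurableSpace E] [BorelSpace E]

theorem exists_FCb1_approx_of_norm_le
    (κ : Measure E) [IsFiniteMeasure κ] {n : ℕ} {s : E → EuclideanSpace ℝ (Fin n)}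
    (hs : AEStronglyMeasurable s κ) {b : ℝ} (hb : b < 1) (hsb : ∀ z, ‖s z‖ ≤ b)
    {ε : ℝ} (hε : 0 < ε) :
    ∃ G : E → EuclideanSpace ℝ (Fin n), (∀ j, (fun z => G z j) ∈ FCb1 E) ∧
      (∀ z, ‖G z‖ ≤ 1) ∧ ∫ z, ‖G z - s z‖ ∂κ ≤ ε := by
  obtain ⟨N, hN, ⟨L, hL⟩, hNs, hN1⟩ :=
    exists_contDiff_lipschitz_eqOn_closedBall_norm_le_one (X := EuclideanSpace ℝ (Fin n)) hb
  have hD : 0 < (L : ℝ) * (κ.real Set.univ + 1) + 2 := by positivity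
  set η := ε / (L * (κ.real Set.univ + 1) + 2)
  have hη : 0 < η := div_pos hε hD
  have hsi : Integrable s κ := .of_bound hs b (ae_of_all _ hsb)
  obtain ⟨c, hsc, hci⟩ := hsi.exists_boundedContinuous_integral_sub_le hη
  obtain ⟨K, -, hK, hKc⟩ := MeasurableSet.univ.exists_isCompact_sdiff_lt (measure_ne_top κ _)
    (ENNReal.ofReal_pos.2 hη).ne'
  obtain ⟨G, hGF, hG1, hGc⟩ := hK.exists_FCb1_near_comp hN hN1 hL c.continuous hη
  refine ⟨G, hGF, hG1, ?_⟩
  have hG2 : ∀ z, ‖G z - s z‖ ≤ 2 := fun z =>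
    (norm_sub_le _ _).trans (by linarith [hG1 z, hsb z])
  have hbound : ∀ z, ‖G z - s z‖ ≤
      L * (η + ‖s z - c z‖) + (Set.univ \ K).indicator (fun _ => 2) z := by
    intro z
    by_cases hz : z ∈ K
    · rw [Set.indicator_of_notMem (fun h => h.2 hz), add_zero, mul_add]
      calc ‖G z - s z‖ ≤ ‖G z - N (c z)‖ + ‖N (c z) - N (s z)‖ := by
            rw [hNs _ (hsb z)]; exact norm_sub_le_norm_sub_add_norm_sub _ _ _
        _ ≤ L * η + L * ‖s z - c z‖ := by
            rw [norm_sub_rev (s z)]; exact add_le_add (hGc z hz) (hL.norm_sub_le _ _)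
    · rw [Set.indicator_of_mem (Set.mem_sdiff_of_mem (Set.mem_univ z) hz)]
      have : 0 ≤ L * (η + ‖s z - c z‖) := by positivity
      linarith [hG2 z]
  have hKm : MeasurableSet (Set.univ \ K) := MeasurableSet.univ.diff hK.measurableSet
  have hKη : κ.real (Set.univ \ K) ≤ η := ENNReal.toReal_le_of_le_ofReal hη.le hKc.le
  have hsc' : Integrable (fun z => ‖s z - c z‖) κ := (hsi.sub hci).norm
  have hsci : Integrable (fun z => L * (η + ‖s z - c z‖)) κ :=
    ((integrable_const η).add hsc').const_mul L
  calc ∫ z, ‖G z - s z‖ ∂κ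
      ≤ ∫ z, (L * (η + ‖s z - c z‖) + (Set.univ \ K).indicator (fun _ => 2) z) ∂κ :=
        integral_mono (integrable_norm_sub_of_norm_le_one
          (continuous_of_forall_mem_FCb1 hGF).aestronglyMeasurable hs hG1
          fun z => (hsb z).trans hb.le) (hsci.add ((integrable_const 2).indicator hKm)) hbound
    _ = L * (η * κ.real Set.univ + ∫ z, ‖s z - c z‖ ∂κ) + 2 * κ.real (Set.univ \ K) := by
        rw [integral_add hsci ((integrable_const 2).indicator hKm), integral_const_mul,
          integral_add (integrable_const η) hsc', integral_indicator_const _ hKm,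
          integral_const, smul_eq_mul, smul_eq_mul]
        ring
    _ ≤ L * (η * κ.real Set.univ + η) + 2 * η := by gcongr
    _ = ε := by linear_combination div_mul_cancel₀ ε hD.ne'

theorem exists_FCb1_approx
    (κ : Measure E) [IsFiniteMeasure κ] {n : ℕ} {s : E → EuclideanSpace ℝ (Fin n)}
    (hs : AEStronglyMeasurable s κ) (hs1 : ∀ z, ‖s z‖ ≤ 1) {ε : ℝ} (hε : 0 < ε) :
    ∃ G : E → EuclideanSpace ℝ (Fin n), (∀ j, (fun z => G z j) ∈ FCb1 E) ∧
      (∀ z, ‖G z‖ ≤ 1) ∧ ∫ z, ‖G z - s z‖ ∂κ ≤ ε := by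
  set δ := min 1 (ε / (2 * (κ.real Set.univ + 1)))
  have hδ0 : 0 < δ := lt_min one_pos (by positivity)
  have hδ1 : δ ≤ 1 := min_le_left _ _
  have hδκ : δ * κ.real Set.univ ≤ ε / 2 :=
    calc δ * κ.real Set.univ ≤ ε / (2 * (κ.real Set.univ + 1)) * (κ.real Set.univ + 1) := by
          gcongr
          · exact min_le_right _ _
          · linarith
      _ = ε / 2 := by field_simp
  have hδs : ∀ z, ‖(1 - δ) • s z‖ ≤ 1 - δ := fun z => by
    rw [norm_smul, Real.norm_of_nonneg (by linarith)]
    exact mul_le_of_le_one_right (by linarith) (hs1 z)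
  obtain ⟨G, hGF, hG1, hGs⟩ := exists_FCb1_approx_of_norm_le κ
    (s := fun z => (1 - δ) • s z) (hs.const_smul (1 - δ)) (by linarith) hδs (half_pos hε)
  refine ⟨G, hGF, hG1, ?_⟩
  have hGc : AEStronglyMeasurable G κ := (continuous_of_forall_mem_FCb1 hGF).aestronglyMeasurable
  have hpt : ∀ z, ‖G z - s z‖ ≤ ‖G z - (1 - δ) • s z‖ + δ := fun z =>
    calc ‖G z - s z‖ ≤ ‖G z - (1 - δ) • s z‖ + ‖(1 - δ) • s z - s z‖ :=
          norm_sub_le_norm_sub_add_norm_sub _ _ _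
      _ ≤ ‖G z - (1 - δ) • s z‖ + δ := by
          rw [sub_smul, one_smul, sub_sub_cancel_left, norm_neg, norm_smul,
            Real.norm_of_nonneg hδ0.le]
          gcongr
          exact mul_le_of_le_one_right hδ0.le (hs1 z)
  have hGi : Integrable (fun z => ‖G z - (1 - δ) • s z‖) κ :=
    integrable_norm_sub_of_norm_le_one hGc (hs.const_smul (1 - δ)) hG1
      fun z => (hδs z).trans (by linarith)
  calc ∫ z, ‖G z - s z‖ ∂κ ≤ ∫ z, (‖G z - (1 - δ) • s z‖ + δ) ∂κ :=
        integral_mono (integrable_norm_sub_of_norm_le_one hGc hs hG1 hs1)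
          (hGi.add (integrable_const δ)) hpt
    _ = ∫ z, ‖G z - (1 - δ) • s z‖ ∂κ + δ * κ.real Set.univ := by
        rw [integral_add hGi (integrable_const δ), integral_const, smul_eq_mul, mul_comm]
    _ ≤ ε := by linarith

theorem integral_norm_le_of_forall_FCb1_inner_le (γ : Measure E) {n : ℕ}
    {W : E → EuclideanSpace ℝ (Fin n)} (hW : Integrable W γ) {V : ℝ}
    (h : ∀ G : E → EuclideanSpace ℝ (Fin n), (∀ j, (fun z => G z j) ∈ FCb1 E) →
      (∀ z, ‖G z‖ ≤ 1) → ∫ z, ⟪G z, W z⟫ ∂γ ≤ V) :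
    ∫ z, ‖W z‖ ∂γ ≤ V := by
  refine le_of_forall_pos_le_add fun ε hε => ?_
  let κ := γ.withDensity fun z => (‖W z‖₊ : ℝ≥0∞)
  have : IsFiniteMeasure κ := isFiniteMeasure_withDensity hW.2.ne
  -- `s = 0` where `W = 0`, since `0⁻¹ = 0`
  let s z := ‖W z‖⁻¹ • W z
  have hs1 : ∀ z, ‖s z‖ ≤ 1 := fun z => by
    rw [norm_smul, norm_inv, norm_norm]; exact inv_mul_le_one
  have hsW : ∀ z, ⟪s z, W z⟫ = ‖W z‖ := fun z => by
    rw [real_inner_smul_left, real_inner_self_eq_norm_sq]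
    rcases eq_or_ne ‖W z‖ 0 with h0 | h0
    · simp [h0]
    · field_simp
  have hs : AEStronglyMeasurable s γ :=
    (hW.1.norm.aemeasurable.inv.aestronglyMeasurable).smul hW.1
  obtain ⟨G, hGF, hG1, hGs⟩ := exists_FCb1_approx κ
    (hs.mono_ac (withDensity_absolutelyContinuous _ _)) hs1 hε
  have hGc := continuous_of_forall_mem_FCb1 hGF
  have hGsW : Integrable (fun z => ‖G z - s z‖ * ‖W z‖) γ :=
    hW.norm.bdd_mul (c := 2) (hGc.aestronglyMeasurable.sub hs).norm (ae_of_all _ fun z => by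
      rw [norm_norm]; exact (norm_sub_le _ _).trans (by linarith [hG1 z, hs1 z]))
  have hGW := integrable_inner_of_norm_le_one hGc.aestronglyMeasurable hG1 hW
  calc ∫ z, ‖W z‖ ∂γ = ∫ z, ⟪s z, W z⟫ ∂γ := by simp_rw [hsW]
    _ ≤ ∫ z, (⟪G z, W z⟫ + ‖G z - s z‖ * ‖W z‖) ∂γ :=
        integral_mono (integrable_inner_of_norm_le_one hs hs1 hW) (hGW.add hGsW) fun z => by
          have := real_inner_le_norm (s z - G z) (W z)
          rw [inner_sub_left, norm_sub_rev] at this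
          linarith
    _ = ∫ z, ⟪G z, W z⟫ ∂γ + ∫ z, ‖G z - s z‖ ∂κ := by
        rw [integral_add hGW hGsW, integral_withDensity_eq_integral_smul₀
          hW.1.aemeasurable.nnnorm]
        simp only [NNReal.smul_def, coe_nnnorm, smul_eq_mul, mul_comm]
    _ ≤ V + ε := add_le_add (h G hGF hG1) hGs

end Approximation

theorem stmt9_general {E : Type*} [NormedAddCommGroup E] [NormedSpace ℝ E] [CompleteSpace E]
    [SecondCountableTopology E] [MeasurableSpace E] [BorelSpace E]
    (γ : Measure E) (n : ℕ)
    (v : Fin n → E → ℝ) (hv : ∀ j, Integrable (v j) γ) (V : ℝ)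
    (h : ∀ g : Fin n → E → ℝ, (∀ j, g j ∈ FCb1 E) → (∀ z, ∑ j, g j z ^ 2 ≤ 1) →
      ∑ j, ∫ z, g j z * v j z ∂γ ≤ V) :
    ∫ z, Real.sqrt (∑ j, v j z ^ 2) ∂γ ≤ V := by
  let W z : EuclideanSpace ℝ (Fin n) := WithLp.toLp 2 fun j => v j z
  have hW : Integrable W γ :=
    (PiLp.continuousLinearEquiv 2 ℝ (fun _ : Fin n => ℝ)).symm.toContinuousLinearMap.integrable_comp
      (integrable_pi_iff.2 hv)
  have hnorm : ∀ z, ‖W z‖ = Real.sqrt (∑ j, v j z ^ 2) := fun z => by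
    simp [W, EuclideanSpace.norm_eq]
  simp_rw [← hnorm]
  refine integral_norm_le_of_forall_FCb1_inner_le γ hW fun G hGF hG1 => ?_
  have hG1' : ∀ z, ∑ j, G z j ^ 2 ≤ 1 := fun z => by
    rw [← EuclideanSpace.real_norm_sq_eq]
    exact pow_le_one₀ (norm_nonneg _) (hG1 z)
  calc ∫ z, ⟪G z, W z⟫ ∂γ = ∫ z, ∑ j, G z j * v j z ∂γ := by
        simp [W, PiLp.inner_apply, mul_comm]
    _ = ∑ j, ∫ z, G z j * v j z ∂γ :=
        integral_finsetSum _ fun j _ => integrable_mul_of_mem_FCb1 (hGF j) (hv j)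
    _ ≤ V := h (fun j z => G z j) hGF hG1'

/-- the duality estimate used in the proof of Theorem 3.2. -/
theorem stmt9 {E : Type*} [NormedAddCommGroup E] [NormedSpace ℝ E] [CompleteSpace E]
    [SecondCountableTopology E] [MeasurableSpace E] [BorelSpace E]
    (γ : Measure E) [IsFiniteMeasure γ] (n : ℕ)
    (v : Fin n → E → ℝ) (hv : ∀ j, Integrable (v j) γ) (V : ℝ) (hV : 0 ≤ V)
    (h : ∀ g : Fin n → E → ℝ, (∀ j, g j ∈ FCb1 E) → (∀ z, ∑ j, g j z ^ 2 ≤ 1) →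
      ∑ j, ∫ z, g j z * v j z ∂γ ≤ V) :
    ∫ z, Real.sqrt (∑ j, v j z ^ 2) ∂γ ≤ V :=
  stmt9_general γ n v hv V h

end
end

section
/- Let E be a real separable Banach space and ζ a finite signed Borel measure on E. Then the total variation of ζ satisfies |ζ|(E) = sup{∫_E g dζ : g ∈ 𝓕C_b¹, ‖g‖_∞ ≤ 1}. -/
open MeasureTheory Filter
open scoped RealInnerProductSpace ENNReal

noncomputable section

/-!
Write `ζ = μ - ν` (Jordan decomposition), so `|ζ|(E) = μ(E) + ν(E)` and `μ ⟂ ν`. Every `g` with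
`|g| ≤ 1` gives `∫ g dμ - ∫ g dν ≤ μ(E) + ν(E)`. Conversely, finite Borel measures on a Polish
space are tight, so `μ` and `ν` are concentrated, up to `ε`, on disjoint compact sets `K` and `L`.
Finitely many continuous functionals `l₁, …, l_m` already separate `K` from `L`, and a smooth
Urysohn function on `ℝ^m`, equal to `1` on the image of `K` and `-1` on that of `L`, gives a
cylinder function `g ∈ 𝓕C_b¹` with `∫ g dμ - ∫ g dν ≥ μ(E) + ν(E) - 4ε`.
-/

open Set
open scoped Manifold

theorem SeparatingDual.exists_disjoint_image_of_isCompact {V : Type*} [AddCommGroup V]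
    [TopologicalSpace V] [Module ℝ V] [SeparatingDual ℝ V] {K L : Set V} (hK : IsCompact K)
    (hL : IsCompact L) (hKL : Disjoint K L) :
    ∃ (m : ℕ) (l : Fin m → V →L[ℝ] ℝ),
      Disjoint ((fun z i => l i z) '' K) ((fun z i => l i z) '' L) := by
  have hcover : K ×ˢ L ⊆ ⋃ l : V →L[ℝ] ℝ, {p | l p.1 ≠ l p.2} := fun p hp =>
    mem_iUnion.2 (SeparatingDual.exists_separating_of_ne (hKL.ne_of_mem hp.1 hp.2))
  obtain ⟨t, ht⟩ := (hK.prod hL).elim_finite_subcover _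
    (fun l => isOpen_ne_fun (l.continuous.comp continuous_fst) (l.continuous.comp continuous_snd))
    hcover
  refine ⟨t.card, fun i => t.equivFin.symm i, disjoint_left.2 ?_⟩
  rintro _ ⟨x, hx, rfl⟩ ⟨y, hy, hxy⟩
  obtain ⟨l, hl, hlxy⟩ := mem_iUnion₂.1 (ht (mk_mem_prod hx hy))
  apply hlxy
  simpa using (congr_fun hxy (t.equivFin ⟨l, hl⟩)).symm

theorem exists_contDiff_eqOn_one_neg_one {F : Type*} [NormedAddCommGroup F] [NormedSpace ℝ F]
    [FiniteDimensional ℝ F] {A B : Set F} (hA : IsCompact A) (hB : IsClosed B)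
    (hAB : Disjoint A B) :
    ∃ f : F → ℝ, ContDiff ℝ 1 f ∧ (∀ x, |f x| ≤ 1) ∧ HasCompactSupport (fderiv ℝ f) ∧
      EqOn f 1 A ∧ EqOn f (-1) B := by
  -- `f = 2h - 1` with `h : F → [0, 1]` smooth, `1` on `A`, `0` on `B` and outside a ball around
  -- `A`; the ball makes `fderiv ℝ f` compactly supported, hence bounded.
  obtain ⟨R, hR⟩ := hA.isBounded.subset_ball 0
  have hfar : IsClosed (B ∪ (Metric.ball (0 : F) R)ᶜ) :=
    hB.union Metric.isOpen_ball.isClosed_compl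
  have hdisj : Disjoint (B ∪ (Metric.ball (0 : F) R)ᶜ) A :=
    disjoint_union_left.2 ⟨hAB.symm, disjoint_compl_left.mono_right hR⟩
  obtain ⟨h, h0, h1, h01⟩ :=
    exists_contMDiffMap_zero_one_of_isClosed 𝓘(ℝ, F) (n := 1) hfar hA.isClosed hdisj
  have hh : ContDiff ℝ 1 h := contMDiff_iff_contDiff.1 h.contMDiff
  have hsupp : HasCompactSupport h :=
    HasCompactSupport.intro (isCompact_closedBall (0 : F) R) fun x hx =>
      h0 (Or.inr fun hxR => hx (Metric.ball_subset_closedBall hxR))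
  refine ⟨fun x => 2 * h x - 1, (contDiff_const.mul hh).sub contDiff_const, fun x => ?_, ?_,
    fun x hx => ?_, fun x hx => ?_⟩
  · obtain ⟨hx0, hx1⟩ : 0 ≤ h x ∧ h x ≤ 1 := h01 x
    exact abs_le.2 ⟨by linarith, by linarith⟩
  · have hd : fderiv ℝ (fun x => 2 * h x - 1) = fun x => (2 : ℝ) • fderiv ℝ h x := by
      ext1 x
      rw [fderiv_sub_const, fderiv_const_mul (hh.differentiable one_ne_zero x)]
    rw [hd]
    exact (hsupp.fderiv ℝ).smul_left (f := fun _ => (2 : ℝ))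
  · norm_num [h1 hx]
  · simp [h0 (Or.inl hx)]

section FCb1

variable {E : Type*} [NormedAddCommGroup E] [NormedSpace ℝ E]

theorem const_mem_FCb1 (c : ℝ) : (fun _ : E => c) ∈ FCb1 E :=
  ⟨0, Fin.elim0, fun _ => c, contDiff_const, ⟨|c|, fun _ => le_rfl⟩, ⟨0, by simp⟩,
    fun _ => rfl⟩

theorem comp_mem_FCb1 {m : ℕ} (l : Fin m → E →L[ℝ] ℝ) {f : (Fin m → ℝ) → ℝ}
    (hf : ContDiff ℝ 1 f) (hf_bdd : ∀ x, |f x| ≤ 1) (hf' : HasCompactSupport (fderiv ℝ f)) :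
    (fun z => f fun i => l i z) ∈ FCb1 E :=
  ⟨m, l, f, hf, ⟨1, hf_bdd⟩,
    (hf.continuous_fderiv one_ne_zero).bounded_above_of_compact_support hf', fun _ => rfl⟩

theorem continuous_of_mem_FCb1_s16 {g : E → ℝ} (hg : g ∈ FCb1 E) : Continuous g := by
  obtain ⟨m, l, f, hf, -, -, hgf⟩ := hg
  rw [funext hgf]
  exact hf.continuous.comp (continuous_pi fun i => (l i).continuous)

theorem exists_mem_FCb1_eqOn_one_neg_one {K L : Set E} (hK : IsCompact K) (hL : IsCompact L)
    (hKL : Disjoint K L) :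
    ∃ g ∈ FCb1 E, (∀ z, |g z| ≤ 1) ∧ EqOn g 1 K ∧ EqOn g (-1) L := by
  obtain ⟨m, l, hl⟩ := SeparatingDual.exists_disjoint_image_of_isCompact hK hL hKL
  have hl_cont : Continuous fun z (i : Fin m) => l i z := continuous_pi fun i => (l i).continuous
  obtain ⟨f, hf, hf_bdd, hf', hfK, hfL⟩ :=
    exists_contDiff_eqOn_one_neg_one (hK.image hl_cont) (hL.image hl_cont).isClosed hl
  exact ⟨_, comp_mem_FCb1 l hf hf_bdd hf', fun z => hf_bdd _,
    fun z hz => hfK (mem_image_of_mem _ hz), fun z hz => hfL (mem_image_of_mem _ hz)⟩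

end FCb1

namespace MeasureTheory

variable {X : Type*} [MeasurableSpace X]

theorem Measure.exists_isCompact_subset_measureReal_compl_lt [TopologicalSpace X] [T2Space X]
    [OpensMeasurableSpace X] (μ : Measure X) [IsFiniteMeasure μ] [μ.InnerRegularCompactLTTop]
    {s : Set X} (hs : MeasurableSet s) (hμs : μ sᶜ = 0) {ε : ℝ} (hε : 0 < ε) :
    ∃ K ⊆ s, IsCompact K ∧ μ.real Kᶜ < ε := by
  obtain ⟨K, hKs, hK, hsK⟩ :=
    hs.exists_isCompact_sdiff_lt (measure_ne_top μ s) (ENNReal.ofReal_pos.2 hε).ne'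
  refine ⟨K, hKs, hK, ENNReal.toReal_lt_of_lt_ofReal ?_⟩
  rwa [← measure_sdiff_null hμs, compl_sdiff_compl]

theorem Measure.MutuallySingular.exists_isCompact_disjoint [TopologicalSpace X] [T2Space X]
    [OpensMeasurableSpace X] {μ ν : Measure X} [IsFiniteMeasure μ] [IsFiniteMeasure ν]
    [μ.InnerRegularCompactLTTop] [ν.InnerRegularCompactLTTop] (hμν : μ ⟂ₘ ν) {ε : ℝ}
    (hε : 0 < ε) :
    ∃ K L : Set X, IsCompact K ∧ IsCompact L ∧ Disjoint K L ∧ μ.real Kᶜ < ε ∧ ν.real Lᶜ < ε := by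
  obtain ⟨s, hs, hμs, hνs⟩ := hμν
  obtain ⟨K, hKs, hK, hμK⟩ := μ.exists_isCompact_subset_measureReal_compl_lt hs.compl
    (by rwa [compl_compl]) hε
  obtain ⟨L, hLs, hL, hνL⟩ := ν.exists_isCompact_subset_measureReal_compl_lt hs hνs hε
  exact ⟨K, L, hK, hL, disjoint_compl_left.mono hKs hLs, hμK, hνL⟩

theorem le_integral_of_abs_le_one_of_eqOn_one (μ : Measure X) [IsFiniteMeasure μ] {g : X → ℝ}
    (hg : Integrable g μ) (hg_bdd : ∀ x, |g x| ≤ 1) {K : Set X} (hK : MeasurableSet K)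
    (hgK : EqOn g 1 K) :
    μ.real univ - 2 * μ.real Kᶜ ≤ ∫ x, g x ∂μ := by
  have hle : ∀ x, 1 - g x ≤ Kᶜ.indicator (fun _ => (2 : ℝ)) x := by
    intro x
    by_cases hx : x ∈ K
    · simp [hgK hx, hx]
    · rw [indicator_of_mem hx]
      linarith [(abs_le.1 (hg_bdd x)).1]
  have := integral_mono (f := fun x => 1 - g x) ((integrable_const 1).sub hg)
    ((integrable_const 2).indicator hK.compl) hle
  rw [integral_sub (integrable_const 1) hg, integral_indicator_const _ hK.compl] at this
  simp only [integral_const, smul_eq_mul, mul_one] at this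
  linarith

theorem integral_sub_integral_le_of_abs_le_one {μ ν : Measure X} [IsFiniteMeasure μ]
    [IsFiniteMeasure ν] {g : X → ℝ} (hg_bdd : ∀ x, |g x| ≤ 1) :
    ∫ x, g x ∂μ - ∫ x, g x ∂ν ≤ μ.real univ + ν.real univ := by
  have hg_norm : ∀ x, ‖g x‖ ≤ 1 := hg_bdd
  have hμ := norm_integral_le_of_norm_le_const (μ := μ) (ae_of_all _ hg_norm)
  have hν := norm_integral_le_of_norm_le_const (μ := ν) (ae_of_all _ hg_norm)
  rw [Real.norm_eq_abs, one_mul] at hμ hν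
  linarith [le_abs_self (∫ x, g x ∂μ), neg_abs_le (∫ x, g x ∂ν)]

theorem Measure.MutuallySingular.exists_mem_FCb1_lt_integral_sub_integral {E : Type*}
    [NormedAddCommGroup E] [NormedSpace ℝ E] [MeasurableSpace E] [BorelSpace E]
    {μ ν : Measure E} [IsFiniteMeasure μ] [IsFiniteMeasure ν] [μ.InnerRegularCompactLTTop]
    [ν.InnerRegularCompactLTTop] (hμν : μ ⟂ₘ ν) {ε : ℝ} (hε : 0 < ε) :
    ∃ g ∈ FCb1 E, (∀ z, |g z| ≤ 1) ∧
      μ.real univ + ν.real univ - ε < ∫ z, g z ∂μ - ∫ z, g z ∂ν := by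
  obtain ⟨K, L, hK, hL, hKL, hμK, hνL⟩ := hμν.exists_isCompact_disjoint (by positivity : 0 < ε / 4)
  obtain ⟨g, hg, hg_bdd, hgK, hgL⟩ := exists_mem_FCb1_eqOn_one_neg_one hK hL hKL
  have hg_int : ∀ ρ : Measure E, [IsFiniteMeasure ρ] → Integrable g ρ := fun ρ _ =>
    .of_bound (continuous_of_mem_FCb1_s16 hg).aestronglyMeasurable 1 (ae_of_all _ hg_bdd)
  have hμg := le_integral_of_abs_le_one_of_eqOn_one μ (hg_int μ) hg_bdd
    hK.isClosed.measurableSet hgK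
  have hνg := le_integral_of_abs_le_one_of_eqOn_one ν (g := fun z => -g z) (hg_int ν).neg
    (by simpa using hg_bdd) hL.isClosed.measurableSet (fun z hz => by simp [hgL hz])
  rw [integral_neg] at hνg
  exact ⟨g, hg, hg_bdd, by linarith⟩

end MeasureTheory

/-- for a finite signed Borel measure `ζ` on a real separable Banach
space `E`, `|ζ|(E) = sup { ∫ g dζ : g ∈ 𝓕C_b¹, ‖g‖_∞ ≤ 1 }`. -/
theorem stmt16 {E : Type*} [NormedAddCommGroup E] [NormedSpace ℝ E] [CompleteSpace E]
    [SecondCountableTopology E] [MeasurableSpace E] [BorelSpace E]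
    (ζ : SignedMeasure E) :
    (ζ.totalVariation Set.univ).toReal =
      sSup {r | ∃ g ∈ FCb1 E, (∀ z, |g z| ≤ 1) ∧ r = sintegral ζ g} := by
  set μ := ζ.toJordanDecomposition.posPart
  set ν := ζ.toJordanDecomposition.negPart
  have hζ : (ζ.totalVariation univ).toReal = μ.real univ + ν.real univ :=
    ENNReal.toReal_add (measure_ne_top μ univ) (measure_ne_top ν univ)
  refine hζ.trans (csSup_eq_of_forall_le_of_forall_lt_exists_gt ?_ ?_ ?_).symm
  · exact ⟨_, 0, const_mem_FCb1 0, by simp, rfl⟩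
  · rintro _ ⟨g, -, hg_bdd, rfl⟩
    exact integral_sub_integral_le_of_abs_le_one hg_bdd
  · intro w hw
    obtain ⟨g, hg, hg_bdd, hwg⟩ :=
      ζ.toJordanDecomposition.mutuallySingular.exists_mem_FCb1_lt_integral_sub_integral
        (sub_pos.2 hw)
    exact ⟨_, ⟨g, hg, hg_bdd, rfl⟩, by rwa [sub_sub_cancel] at hwg⟩
end
end
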